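/- Let μ = (1/2) N(-r, γ²) + (1/2) N(r, γ²) with r ≥ 0 and γ ∈ (0,1). Then the function y ↦ f(t,y) - y/(1+t) is nonincreasing in y for all t ≥ 0 if and only if r ≤ γ√(1-γ²), where f(t,y) = ∫ u e^{uy - u²t/2} μ(du) / ∫ e^{uy - u²t/2} μ(du). -/

import Mathlib

/-!
Multiplying the density of `N(m, v)` by the likelihood factor `exp (u y - u² t / 2)` completes
a square: the result is a constant `C(m)` times the density of
`N((m + v y) / (1 + v t), v / (1 + v t))`.
For the two components `m = ±r` of the mixture the constants differ only by the factors
`exp (± r y / (1 + γ² t))`, so the posterior mean is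
`f(t,y) = γ² y / (1 + γ² t) + (r / (1 + γ² t)) tanh (r y / (1 + γ² t))`.
Since `tanh' = 1 - tanh² ≤ 1` with equality at `0`, the map `y ↦ f(t,y) - y / (1 + t)` is antitone
iff its slope at `0` is nonpositive, which after clearing denominators is
`0 ≤ (1 - γ² - r²) + t (γ² (1 - γ²) - r²)`. This holds for all `t ≥ 0` iff `r² ≤ γ² (1 - γ²)`.
-/

open Real Set MeasureTheory ProbabilityTheory

/-- The symmetric two-component Gaussian mixture `(1/2) N(-r, γ²) + (1/2) N(r, γ²)`. -/
noncomputable def mixGauss (r γ : ℝ) : Measure ℝ :=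
  (1 / 2 : ENNReal) • gaussianReal (-r) ⟨γ ^ 2, sq_nonneg γ⟩ +
    (1 / 2 : ENNReal) • gaussianReal r ⟨γ ^ 2, sq_nonneg γ⟩

/-- The posterior mean function `f(t,y)` for the prior `μ`. -/
noncomputable def fpost (μ : Measure ℝ) (t y : ℝ) : ℝ :=
  (∫ u, u * Real.exp (u * y - u ^ 2 * t / 2) ∂μ) /
    ∫ u, Real.exp (u * y - u ^ 2 * t / 2) ∂μ

open scoped NNReal ENNReal

section GaussianTilt

variable (m y t : ℝ) {v : ℝ≥0}

theorem gaussianPDFReal_mul_exp (hv : v ≠ 0) (h : 0 < 1 + v * t) (u : ℝ) :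
    gaussianPDFReal m v u * exp (u * y - u ^ 2 * t / 2) =
      exp ((m + v * y) ^ 2 / (2 * v * (1 + v * t)) - m ^ 2 / (2 * v)) / √(1 + v * t) *
        gaussianPDFReal ((m + v * y) / (1 + v * t)) (v / (1 + v * t)).toNNReal u := by
  have hv' : (0 : ℝ) < v := by positivity
  have hD : 1 + v * t ≠ 0 := h.ne'
  have hexponent : -(u - m) ^ 2 / (2 * v) + (u * y - u ^ 2 * t / 2) =
      ((m + v * y) ^ 2 / (2 * v * (1 + v * t)) - m ^ 2 / (2 * v)) +
        -(u - (m + v * y) / (1 + v * t)) ^ 2 / (2 * (v / (1 + v * t))) := by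
    field_simp
    ring
  simp only [gaussianPDFReal, Real.coe_toNNReal _ (div_nonneg hv'.le h.le)]
  rw [mul_div_assoc', Real.sqrt_div' _ h.le, mul_assoc, ← exp_add, hexponent, exp_add]
  field_simp

theorem withDensity_exp_gaussianReal (hv : v ≠ 0) (h : 0 < 1 + v * t) :
    (gaussianReal m v).withDensity (fun u ↦ ENNReal.ofReal (exp (u * y - u ^ 2 * t / 2))) =
      ENNReal.ofReal (exp ((m + v * y) ^ 2 / (2 * v * (1 + v * t)) - m ^ 2 / (2 * v)) /
          √(1 + v * t)) •
        gaussianReal ((m + v * y) / (1 + v * t)) (v / (1 + v * t)).toNNReal := by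
  have hv' : (v / (1 + v * t)).toNNReal ≠ 0 := by
    have : (0 : ℝ) < v := by positivity
    simpa using div_pos this h
  rw [gaussianReal_of_var_ne_zero _ hv, gaussianReal_of_var_ne_zero _ hv',
    ← withDensity_mul _ (measurable_gaussianPDF _ _) (by fun_prop),
    ← withDensity_smul _ (measurable_gaussianPDF _ _)]
  congr 1
  funext u
  simp only [Pi.mul_apply, Pi.smul_apply, smul_eq_mul, gaussianPDF]
  rw [← ENNReal.ofReal_mul (gaussianPDFReal_nonneg _ _ _),
    ← ENNReal.ofReal_mul (by positivity), gaussianPDFReal_mul_exp m y t hv h]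

theorem integral_mul_exp_gaussianReal (hv : v ≠ 0) (h : 0 < 1 + v * t) (g : ℝ → ℝ) :
    ∫ u, g u * exp (u * y - u ^ 2 * t / 2) ∂gaussianReal m v =
      exp ((m + v * y) ^ 2 / (2 * v * (1 + v * t)) - m ^ 2 / (2 * v)) / √(1 + v * t) *
        ∫ u, g u ∂gaussianReal ((m + v * y) / (1 + v * t)) (v / (1 + v * t)).toNNReal := by
  have := integral_withDensity_eq_integral_toReal_smul (μ := gaussianReal m v)
    (f := fun u ↦ ENNReal.ofReal (exp (u * y - u ^ 2 * t / 2))) (by fun_prop) (by simp) g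
  rw [withDensity_exp_gaussianReal m y t hv h, integral_smul_measure,
    ENNReal.toReal_ofReal (by positivity)] at this
  simpa only [ENNReal.toReal_ofReal (exp_pos _).le, smul_eq_mul, mul_comm] using this.symm

theorem MeasureTheory.Integrable.mul_exp_gaussianReal (hv : v ≠ 0) (h : 0 < 1 + v * t)
    {g : ℝ → ℝ}
    (hg : Integrable g (gaussianReal ((m + v * y) / (1 + v * t)) (v / (1 + v * t)).toNNReal)) :
    Integrable (fun u ↦ g u * exp (u * y - u ^ 2 * t / 2)) (gaussianReal m v) := by
  have := (withDensity_exp_gaussianReal m y t hv h).symm ▸ hg.smul_measure ENNReal.ofReal_ne_top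
  rw [integrable_withDensity_iff_integrable_smul' (by fun_prop) (by simp)] at this
  simpa only [ENNReal.toReal_ofReal (exp_pos _).le, smul_eq_mul, mul_comm] using this

end GaussianTilt

theorem integral_mixGauss (r γ : ℝ) {g : ℝ → ℝ}
    (hg : ∀ m, Integrable g (gaussianReal m ⟨γ ^ 2, sq_nonneg γ⟩)) :
    ∫ u, g u ∂mixGauss r γ =
      ((∫ u, g u ∂gaussianReal (-r) ⟨γ ^ 2, sq_nonneg γ⟩) +
        ∫ u, g u ∂gaussianReal r ⟨γ ^ 2, sq_nonneg γ⟩) / 2 := by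
  rw [mixGauss, integral_add_measure ((hg _).smul_measure (by simp))
    ((hg _).smul_measure (by simp)), integral_smul_measure, integral_smul_measure]
  simp only [one_div, ENNReal.toReal_inv, ENNReal.toReal_ofNat, smul_eq_mul]
  ring

theorem fpost_mixGauss (r γ t y : ℝ) (hγ : γ ≠ 0) (h : 0 < 1 + γ ^ 2 * t) :
    fpost (mixGauss r γ) t y =
      γ ^ 2 * y / (1 + γ ^ 2 * t) + r / (1 + γ ^ 2 * t) * tanh (r / (1 + γ ^ 2 * t) * y) := by
  set v : ℝ≥0 := ⟨γ ^ 2, sq_nonneg γ⟩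
  have hv : v ≠ 0 := by rw [← NNReal.coe_ne_zero]; exact pow_ne_zero 2 hγ
  have hint : ∀ m, Integrable (fun u ↦ exp (u * y - u ^ 2 * t / 2)) (gaussianReal m v) := fun m ↦ by
    simpa using (integrable_const (1 : ℝ)).mul_exp_gaussianReal m y t hv h
  have hint_id : ∀ m, Integrable (fun u ↦ u * exp (u * y - u ^ 2 * t / 2)) (gaussianReal m v) :=
    fun m ↦ ((memLp_id_gaussianReal 1).integrable le_rfl).mul_exp_gaussianReal m y t hv h
  have hden : ∀ m, ∫ u, exp (u * y - u ^ 2 * t / 2) ∂gaussianReal m v = _ := fun m ↦ by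
    simpa using integral_mul_exp_gaussianReal m y t hv h (fun _ ↦ 1)
  have hnum := fun m ↦ integral_mul_exp_gaussianReal m y t hv h id
  simp only [id, integral_id_gaussianReal] at hnum
  rw [fpost, integral_mixGauss r γ hint_id, integral_mixGauss r γ hint, hnum, hnum, hden, hden]
  have hvγ : (v : ℝ) = γ ^ 2 := rfl
  have hD : 1 + γ ^ 2 * t ≠ 0 := h.ne'
  have hsplit : ∀ m,
      exp ((m + γ ^ 2 * y) ^ 2 / (2 * γ ^ 2 * (1 + γ ^ 2 * t)) - m ^ 2 / (2 * γ ^ 2)) =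
        exp ((γ ^ 2 * y ^ 2 - m ^ 2 * t) / (2 * (1 + γ ^ 2 * t))) *
          exp (m / (1 + γ ^ 2 * t) * y) := by
    intro m
    rw [← exp_add]
    congr 1
    field_simp
    ring
  rw [hvγ, hsplit, hsplit, tanh_eq_sinh_div_cosh, sinh_eq, cosh_eq]
  simp only [neg_sq, neg_div, neg_mul]
  field_simp
  ring

theorem Real.hasDerivAt_tanh (x : ℝ) : HasDerivAt tanh (1 - tanh x ^ 2) x := by
  have h := (hasDerivAt_sinh x).div (hasDerivAt_cosh x) (cosh_pos x).ne'
  rw [show sinh / cosh = tanh from funext fun z ↦ (tanh_eq_sinh_div_cosh z).symm] at h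
  refine h.congr_deriv ?_
  rw [tanh_eq_sinh_div_cosh]
  field_simp

theorem antitone_mul_add_mul_tanh_iff (a b : ℝ) :
    Antitone (fun y ↦ a * y + b * tanh (b * y)) ↔ a + b ^ 2 ≤ 0 := by
  have hderiv : ∀ y, HasDerivAt (fun y ↦ a * y + b * tanh (b * y))
      (a + b ^ 2 * (1 - tanh (b * y) ^ 2)) y := fun y ↦
    ((hasDerivAt_const_mul a).add (((hasDerivAt_tanh (b * y)).comp y
      (hasDerivAt_const_mul b)).const_mul b)).congr_deriv (by ring)
  constructor
  · intro hanti
    simpa using (hderiv 0).nonpos_of_antitone hanti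
  · intro hab
    refine antitone_of_deriv_nonpos (fun y ↦ (hderiv y).differentiableAt) fun y ↦ ?_
    rw [(hderiv y).deriv]
    nlinarith [mul_nonneg (sq_nonneg b) (sq_nonneg (tanh (b * y)))]

theorem forall_nonneg_add_mul_nonneg_iff {K : Type*} [Field K] [LinearOrder K]
    [IsStrictOrderedRing K] {a b : K} :
    (∀ t, 0 ≤ t → 0 ≤ a + t * b) ↔ 0 ≤ a ∧ 0 ≤ b := by
  refine ⟨fun h ↦ ⟨by simpa using h 0 le_rfl, ?_⟩, fun ⟨ha, hb⟩ t ht ↦ by positivity⟩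
  by_contra! hb
  have := h ((a + 1) / -b) (div_nonneg (by linarith [h 0 le_rfl]) (by linarith))
  rw [div_mul_eq_mul_div, div_neg, mul_div_cancel_right₀ _ hb.ne] at this
  linarith

theorem antitone_fpost_mixGauss_sub_iff (r γ t : ℝ) (hγ : γ ≠ 0) (ht : 0 ≤ t) :
    Antitone (fun y ↦ fpost (mixGauss r γ) t y - y / (1 + t)) ↔
      0 ≤ (1 - γ ^ 2 - r ^ 2) + t * (γ ^ 2 * (1 - γ ^ 2) - r ^ 2) := by
  have hD : 0 < 1 + γ ^ 2 * t := by positivity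
  have hfun : (fun y ↦ fpost (mixGauss r γ) t y - y / (1 + t)) = fun y ↦
      (γ ^ 2 / (1 + γ ^ 2 * t) - 1 / (1 + t)) * y +
        r / (1 + γ ^ 2 * t) * tanh (r / (1 + γ ^ 2 * t) * y) := by
    funext y
    rw [fpost_mixGauss r γ t y hγ hD]
    ring
  have hslope : γ ^ 2 / (1 + γ ^ 2 * t) - 1 / (1 + t) + (r / (1 + γ ^ 2 * t)) ^ 2 =
      -((1 - γ ^ 2 - r ^ 2) + t * (γ ^ 2 * (1 - γ ^ 2) - r ^ 2)) /
        ((1 + γ ^ 2 * t) ^ 2 * (1 + t)) := by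
    field_simp
    ring
  rw [hfun, antitone_mul_add_mul_tanh_iff, hslope, div_le_iff₀ (by positivity), zero_mul,
    neg_nonpos]

theorem stmt15 (r γ : ℝ) (hr : 0 ≤ r) (hγ : γ ∈ Set.Ioo (0 : ℝ) 1) :
    (∀ t : ℝ, 0 ≤ t →
        Antitone (fun y : ℝ => fpost (mixGauss r γ) t y - y / (1 + t))) ↔
      r ≤ γ * Real.sqrt (1 - γ ^ 2) := by
  obtain ⟨hγ0, hγ1⟩ := hγ
  have hγ2 : 0 < 1 - γ ^ 2 := by nlinarith
  have hsqrt : γ * √(1 - γ ^ 2) = √(γ ^ 2 * (1 - γ ^ 2)) := by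
    rw [sqrt_mul (sq_nonneg γ), sqrt_sq hγ0.le]
  rw [forall₂_congr fun t ht ↦ antitone_fpost_mixGauss_sub_iff r γ t hγ0.ne' ht,
    forall_nonneg_add_mul_nonneg_iff, hsqrt, le_sqrt hr (by positivity)]
  constructor
  · rintro ⟨-, h⟩
    linarith
  · intro h
    constructor <;> nlinarith
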